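/- Correctness of the flag construction for Φ_o = F_{[0,T_o]} F_{[0,T_in]} φ: with the flag f for the inner formula F_{[0,T_in]}φ, define Sat(t) = 1 if f(t) > 0 and Sat(t) = 0 otherwise, and define fin recursively by fin(T_in + 1) = Sat(T_in + 1) and fin(t+1) = max(Sat(t+1), fin(t)) for t ≥ T_in + 1. Then fin(T_o + T_in + 1) = 1 if and only if there exist integers t ∈ {0,…,T_o} and t' ∈ {0,…,T_in} such that φ(s(t + t')) holds, i.e., if and only if the discrete-time signal s satisfies F_{[0,T_o]} F_{[0,T_in]} φ at time 0. -/
import Mathlib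


/-- Flag for the inner formula F_{[0,T_in]}φ: f(0) = 0, f(t+1) = T_in + 1 if φ(s(t)),
and f(t+1) = max(f(t) − 1, 0) otherwise (truncated subtraction on ℕ). -/
def flagF {S : Type*} (s : ℕ → S) (φ : S → Prop) [DecidablePred φ] (Tin : ℕ) : ℕ → ℕ
  | 0 => 0
  | (t + 1) => if φ (s t) then Tin + 1 else flagF s φ Tin t - 1

lemma flag_lt_iff {S : Type*} (s : ℕ → S) (φ : S → Prop) [DecidablePred φ] (Tin : ℕ) :
    ∀ t k, (k < flagF s φ Tin t ↔ ∃ j, j + 1 ≤ t ∧ t + k ≤ j + Tin + 1 ∧ φ (s j)) := by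
  intro t
  induction t with
  | zero => intro k; simp [flagF]
  | succ t ih =>
    intro k
    by_cases h : φ (s t)
    · simp only [flagF, if_pos h]
      constructor
      · intro hk; exact ⟨t, le_refl _, by omega, h⟩
      · rintro ⟨j, hj1, hj2, _⟩; omega
    · simp only [flagF, if_neg h]
      have hkey := ih (k+1)
      constructor
      · intro hk
        obtain ⟨j, hj1, hj2, hj3⟩ := hkey.mp (by omega)
        exact ⟨j, by omega, by omega, hj3⟩
      · rintro ⟨j, hj1, hj2, hj3⟩
        have hjt : j + 1 ≤ t := by
          rcases Nat.lt_or_ge j t with h' | h'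
          · omega
          · have hj : j = t := by omega
            exact absurd (hj ▸ hj3) h
        have := hkey.mpr ⟨j, hjt, by omega, hj3⟩
        omega

/-- Correctness of the flag construction for Φ_o = F_{[0,T_o]} F_{[0,T_in]} φ. -/
theorem stmt16 {S : Type*} (s : ℕ → S) (φ : S → Prop) [DecidablePred φ] (To Tin : ℕ)
    (Sat : ℕ → ℕ) (hSat : ∀ t : ℕ, Sat t = if 0 < flagF s φ Tin t then 1 else 0)
    (fin : ℕ → ℕ) (hfin0 : fin (Tin + 1) = Sat (Tin + 1))
    (hfin : ∀ t : ℕ, Tin + 1 ≤ t → fin (t + 1) = max (Sat (t + 1)) (fin t)) :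
    fin (To + Tin + 1) = 1 ↔ ∃ t ≤ To, ∃ t' ≤ Tin, φ (s (t + t')) := by
  have hle : ∀ k, fin (Tin + 1 + k) ≤ 1 := by
    intro k
    induction k with
    | zero => rw [Nat.add_zero, hfin0, hSat]; split <;> omega
    | succ k ih =>
      have heq : Tin + 1 + (k + 1) = (Tin + 1 + k) + 1 := rfl
      rw [heq, hfin _ (by omega), Nat.max_le, hSat]
      exact ⟨by split <;> omega, ih⟩
  have key : ∀ k, fin (Tin + 1 + k) = 1 ↔ ∃ m ≤ k, 0 < flagF s φ Tin (Tin + 1 + m) := by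
    intro k
    induction k with
    | zero =>
      rw [Nat.add_zero, hfin0, hSat]
      constructor
      · intro h
        refine ⟨0, le_refl _, ?_⟩
        rw [Nat.add_zero]
        by_contra hc
        simp [hc] at h
      · rintro ⟨m, hm, hpos⟩
        have hm0 : m = 0 := by omega
        subst hm0
        rw [Nat.add_zero] at hpos
        simp [hpos]
    | succ k ih =>
      have heq : Tin + 1 + (k + 1) = (Tin + 1 + k) + 1 := rfl
      rw [heq, hfin _ (by omega), hSat]
      constructor
      · intro h
        by_cases hc : 0 < flagF s φ Tin (Tin + 1 + k + 1)
        · exact ⟨k + 1, le_refl _, hc⟩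
        · rw [if_neg hc] at h
          simp only [Nat.zero_max] at h
          obtain ⟨m, hm, hpos⟩ := ih.mp h
          exact ⟨m, by omega, hpos⟩
      · rintro ⟨m, hm, hpos⟩
        rcases Nat.lt_or_ge m (k + 1) with h' | h'
        · rw [ih.mpr ⟨m, by omega, hpos⟩]
          have ha : (if 0 < flagF s φ Tin (Tin + 1 + k + 1) then 1 else 0) ≤ 1 := by
            split <;> omega
          exact Nat.max_eq_right ha
        · have hmk : m = k + 1 := by omega
          subst hmk
          rw [heq] at hpos
          rw [if_pos hpos]
          exact Nat.max_eq_left (hle k)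
  have h2 : To + Tin + 1 = Tin + 1 + To := by omega
  rw [h2, key To]
  constructor
  · rintro ⟨m, hm, hpos⟩
    obtain ⟨j, hj1, hj2, hj3⟩ := (flag_lt_iff s φ Tin _ 0).mp hpos
    refine ⟨m, hm, j - m, by omega, ?_⟩
    have hjm : m + (j - m) = j := by omega
    rw [hjm]; exact hj3
  · rintro ⟨t, ht, t', ht', hφ⟩
    refine ⟨t, ht, (flag_lt_iff s φ Tin _ 0).mpr ⟨t + t', by omega, by omega, hφ⟩⟩
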